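/- arXiv:2507.02719 — 3 statements merged into one kernel-verified Lean document; each statement's English description precedes it below -/
import Mathlib

section
/- Characterization of the first branch: let ũ = (u_F, 0, …, 0) ∈ ℂ^n with u_F ∈ ℂ^k, (u_F)₊ ≠ 0, and let L₁(θ; ũ) be the system obtained from L_A(θ; ũ) by replacing its last polynomial with θ_d^{α+1}. Then the common zero set of L₁(θ; ũ) in ℂ^{d+1} equals V(L_{A_F}(·; u_F)) × {0}, i.e., a point θ̂ ∈ ℂ^{d+1} is a zero of L₁(θ; ũ) if and only if θ̂_d = 0 and (θ̂₀,…,θ̂_{d−1}) is a common zero of the facial likelihood system L_{A_F}((θ₀,…,θ_{d−1}); u_F). -/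
noncomputable section

open scoped BigOperators

/-- Given `φ = (θ₀, θ₁, …, θ_{d-1}) : Fin d → ℂ`, the vector
`(θ₁, …, θ_{d-1}, 0) : Fin d → ℂ` of torus variables with last coordinate `θ_d = 0`
(slot `j : Fin d` corresponds to the variable `θ_{j+1}`). -/
def thetaVec {d : ℕ} (φ : Fin d → ℂ) : Fin d → ℂ :=
  fun j => if h : (j : ℕ) + 1 < d then φ ⟨(j : ℕ) + 1, h⟩ else 0

/-- The extension of facial data `u_F ∈ ℂ^k` by `n - k` data zeros:
`ũ = (u_F, 0, …, 0) ∈ ℂ^n`. -/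
def utilde {k n : ℕ} (uF : Fin k → ℂ) : Fin n → ℂ :=
  fun i => if h : (i : ℕ) < k then uF ⟨(i : ℕ), h⟩ else 0

/-- The zero set of the likelihood system `L_A(θ; u)` in the variables
`θ = (θ₀, θ₁, …, θ_d) : Fin (d+1) → ℂ`, for the design matrix `A` with columns
`(1, a_i)` and `f = Σ_i c_i θ^{a_i}`: the equations are `θ₀ f - 1 = 0` and, for each
slot `r : Fin d` (corresponding to the variable `θ_{r+1}`),
`θ₀ θ_{r+1} ∂f/∂θ_{r+1} - u₊⁻¹ (A u)_{r+2} = 0`,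
where `θ_{r+1} ∂f/∂θ_{r+1} = Σ_m c_m a_{m,r} θ^{a_m}`. -/
def ZA {d n : ℕ} (a : Fin n → Fin d → ℕ) (c : Fin n → ℂ) (u : Fin n → ℂ) :
    Set (Fin (d + 1) → ℂ) :=
  {θ | θ 0 * (∑ m, c m * ∏ j, θ j.succ ^ a m j) - 1 = 0 ∧
    ∀ r : Fin d,
      θ 0 * (∑ m, c m * (a m r : ℂ) * ∏ j, θ j.succ ^ a m j)
        - (∑ m, u m)⁻¹ * (∑ m, (a m r : ℂ) * u m) = 0}

/-- The zero set of the facial likelihood system `L_{A_F}((θ₀, …, θ_{d-1}); u_F)` in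
the variables `φ = (θ₀, …, θ_{d-1}) : Fin d → ℂ`, for the facial design matrix `A_F`
consisting of the first `k` columns of `A` (with the last row removed) and
`f_F = Σ_{m<k} c_m θ^{a_m}` (which does not involve `θ_d`): the equations are
`θ₀ f_F - 1 = 0` and, for each slot `r : Fin d` with `r + 1 < d` (variable `θ_{r+1}`),
`θ₀ θ_{r+1} ∂f_F/∂θ_{r+1} - (u_F)₊⁻¹ (A_F u_F)_{r+2} = 0`. -/
def ZF {d k n : ℕ} (hd : 0 < d) (hkn : k ≤ n) (a : Fin n → Fin d → ℕ) (c : Fin n → ℂ)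
    (uF : Fin k → ℂ) : Set (Fin d → ℂ) :=
  {φ | φ ⟨0, hd⟩ * (∑ m : Fin k, c (Fin.castLE hkn m) *
        ∏ j, thetaVec φ j ^ a (Fin.castLE hkn m) j) - 1 = 0 ∧
    ∀ r : Fin d, (r : ℕ) + 1 < d →
      φ ⟨0, hd⟩ * (∑ m : Fin k, c (Fin.castLE hkn m) * (a (Fin.castLE hkn m) r : ℂ) *
          ∏ j, thetaVec φ j ^ a (Fin.castLE hkn m) j)
        - (∑ m, uF m)⁻¹ * (∑ m : Fin k, (a (Fin.castLE hkn m) r : ℂ) * uF m) = 0}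

/-- The polynomial `g = θ_d^{-α} ∂f/∂θ_d`, as a function on `ℂ^d` (torus variables
`θ₁, …, θ_d`, slot `j : Fin d` for `θ_{j+1}`):
`g = Σ_{m ≥ k} c_m a_{m,d} θ_d^{a_{m,d} - 1 - α} ∏_{j<d-1} θ_{j+1}^{a_{m,j}}`. -/
def gfun {d n : ℕ} (hd : 0 < d) (k α : ℕ) (a : Fin n → Fin d → ℕ) (c : Fin n → ℂ)
    (θ : Fin d → ℂ) : ℂ :=
  ∑ m ∈ Finset.univ.filter (fun m : Fin n => k ≤ (m : ℕ)),
    c m * (a m ⟨d - 1, Nat.sub_lt hd Nat.one_pos⟩ : ℂ) *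
      ∏ j, θ j ^ (if (j : ℕ) = d - 1 then a m j - (α + 1) else a m j)

/-- The common zeros of the first `d` polynomials of `L_A(θ; u)`: the equation
`θ₀ f - 1 = 0` together with the equations for the variables `θ₁, …, θ_{d-1}`
(slots `r : Fin d` with `r + 1 < d`). -/
def partialZA {d n : ℕ} (a : Fin n → Fin d → ℕ) (c : Fin n → ℂ) (u : Fin n → ℂ) :
    Set (Fin (d + 1) → ℂ) :=
  {θ | θ 0 * (∑ m, c m * ∏ j, θ j.succ ^ a m j) - 1 = 0 ∧
    ∀ r : Fin d, (r : ℕ) + 1 < d →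
      θ 0 * (∑ m, c m * (a m r : ℂ) * ∏ j, θ j.succ ^ a m j)
        - (∑ m, u m)⁻¹ * (∑ m, (a m r : ℂ) * u m) = 0}

/-- The zero set of the system `L₁(θ; u)`, obtained from `L_A(θ; u)` by replacing the
last polynomial by `θ_d^{α+1}`. -/
def Z1 {d n : ℕ} (α : ℕ) (a : Fin n → Fin d → ℕ) (c : Fin n → ℂ) (u : Fin n → ℂ) :
    Set (Fin (d + 1) → ℂ) :=
  {θ | θ ∈ partialZA a c u ∧ θ (Fin.last d) ^ (α + 1) = 0}

/-- The zero set of the system `L₂(θ; u)`, obtained from `L_A(θ; u)` by replacing the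
last polynomial by `θ₀ θ_d g`. -/
def Z2 {d n : ℕ} (hd : 0 < d) (k α : ℕ) (a : Fin n → Fin d → ℕ) (c : Fin n → ℂ)
    (u : Fin n → ℂ) : Set (Fin (d + 1) → ℂ) :=
  {θ | θ ∈ partialZA a c u ∧
    θ 0 * θ (Fin.last d) * gfun hd k α a c (fun j => θ j.succ) = 0}

lemma sum_castLE_eq {k n : ℕ} (hkn : k ≤ n) (F : Fin n → ℂ)
    (h0 : ∀ m : Fin n, k ≤ (m : ℕ) → F m = 0) :
    ∑ m, F m = ∑ m : Fin k, F (Fin.castLE hkn m) := by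
  classical
  have hmap : (∑ m ∈ Finset.univ.map (Fin.castLEEmb hkn), F m)
      = ∑ m : Fin k, F (Fin.castLE hkn m) := Finset.sum_map _ _ _
  rw [← hmap]
  refine (Finset.sum_subset (Finset.subset_univ _) ?_).symm
  intro x _ hx
  apply h0
  by_contra h
  push_neg at h
  exact hx (Finset.mem_map.2 ⟨⟨x, h⟩, Finset.mem_univ _, by ext; simp⟩)

/-- Characterization of the first branch: for `ũ = (u_F, 0, …, 0)`, the common zero
set of `L₁(θ; ũ)` equals `V(L_{A_F}(·; u_F)) × {0}`; that is, `θ` is a zero of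
`L₁(θ; ũ)` if and only if `θ_d = 0` and `(θ₀, …, θ_{d-1})` is a common zero of the
facial likelihood system `L_{A_F}((θ₀, …, θ_{d-1}); u_F)`. -/
theorem first_branch_is_facial {d k n : ℕ} (hd : 2 ≤ d) (hk : 1 ≤ k) (hkn : k < n)
    (a : Fin n → Fin d → ℕ)
    (ha0 : ∀ i : Fin n, (i : ℕ) < k → a i ⟨d - 1, by omega⟩ = 0)
    (ha1 : ∀ i : Fin n, k ≤ (i : ℕ) → 1 ≤ a i ⟨d - 1, by omega⟩)
    (c : Fin n → ℂ) (hc : ∀ i, c i ≠ 0)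
    (α : ℕ)
    (hα1 : ∀ i : Fin n, k ≤ (i : ℕ) → α + 1 ≤ a i ⟨d - 1, by omega⟩)
    (hα2 : ∃ i : Fin n, k ≤ (i : ℕ) ∧ a i ⟨d - 1, by omega⟩ = α + 1)
    (uF : Fin k → ℂ) (huF : (∑ m, uF m) ≠ 0)
    (θ : Fin (d + 1) → ℂ) :
    θ ∈ Z1 α a c (utilde uF) ↔
      (θ (Fin.last d) = 0 ∧ Fin.init θ ∈ ZF (by omega) (le_of_lt hkn) a c uF) := by
  have hd0 : 0 < d := by omega
  have hkn' : k ≤ n := le_of_lt hkn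
  have heq : θ (Fin.last d) = 0 →
      (θ ∈ partialZA a c (utilde uF) ↔ Fin.init θ ∈ ZF (by omega) hkn' a c uF) := by
    intro hθd
    have hlastd : (⟨d - 1, Nat.sub_lt hd0 Nat.one_pos⟩ : Fin d).succ = Fin.last d := by
      ext; simp; omega
    have hprod0 : ∀ m : Fin n, k ≤ (m : ℕ) → (∏ j, θ j.succ ^ a m j) = 0 := by
      intro m hm
      apply Finset.prod_eq_zero (Finset.mem_univ (⟨d - 1, Nat.sub_lt hd0 Nat.one_pos⟩ : Fin d))
      rw [hlastd, hθd]
      exact zero_pow (by have := ha1 m hm; omega)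
    have hprodeq : ∀ m : Fin n, (m : ℕ) < k →
        (∏ j, θ j.succ ^ a m j) = ∏ j, thetaVec (Fin.init θ) j ^ a m j := by
      intro m hm
      refine Finset.prod_congr rfl fun j _ => ?_
      by_cases h : (j : ℕ) + 1 < d
      · have hv : thetaVec (Fin.init θ) j = θ j.succ := by
          rw [thetaVec, dif_pos h, Fin.init]
          congr 1
        rw [hv]
      · have hj : j = (⟨d - 1, Nat.sub_lt hd0 Nat.one_pos⟩ : Fin d) := by
          ext; simp; omega
        have haz : a m j = 0 := by rw [hj]; exact ha0 m hm
        rw [haz]; simp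
    have E2 : (∑ m : Fin n, c m * ∏ j, θ j.succ ^ a m j)
        = ∑ m : Fin k, c (Fin.castLE hkn' m) *
            ∏ j, thetaVec (Fin.init θ) j ^ a (Fin.castLE hkn' m) j := by
      rw [sum_castLE_eq hkn' _ (fun m hm => by rw [hprod0 m hm, mul_zero])]
      exact Finset.sum_congr rfl fun m _ => by
        rw [hprodeq _ (by simpa using m.isLt)]
    have E3 : ∀ r : Fin d, (∑ m : Fin n, c m * (a m r : ℂ) * ∏ j, θ j.succ ^ a m j)
        = ∑ m : Fin k, c (Fin.castLE hkn' m) * (a (Fin.castLE hkn' m) r : ℂ) *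
            ∏ j, thetaVec (Fin.init θ) j ^ a (Fin.castLE hkn' m) j := by
      intro r
      rw [sum_castLE_eq hkn' _ (fun m hm => by rw [hprod0 m hm, mul_zero])]
      exact Finset.sum_congr rfl fun m _ => by
        rw [hprodeq _ (by simpa using m.isLt)]
    have E4 : (∑ m : Fin n, utilde (n := n) uF m) = ∑ m, uF m := by
      rw [sum_castLE_eq hkn' _ (fun m hm => by rw [utilde]; exact dif_neg (by omega))]
      refine Finset.sum_congr rfl fun m _ => ?_
      rw [utilde, dif_pos (by simpa using m.isLt)]
      congr 1
    have E5 : ∀ r : Fin d, (∑ m : Fin n, (a m r : ℂ) * utilde (n := n) uF m)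
        = ∑ m : Fin k, (a (Fin.castLE hkn' m) r : ℂ) * uF m := by
      intro r
      rw [sum_castLE_eq hkn' _ (fun m hm => by
        rw [show utilde (n := n) uF m = 0 from dif_neg (by omega), mul_zero])]
      refine Finset.sum_congr rfl fun m _ => ?_
      rw [show utilde (n := n) uF (Fin.castLE hkn' m) = uF m from by
        rw [utilde, dif_pos (by simpa using m.isLt)]
        congr 1]
    have h00 : Fin.init θ ⟨0, by omega⟩ = θ 0 := by
      have hc0 : (Fin.castSucc (⟨0, hd0⟩ : Fin d)) = (0 : Fin (d + 1)) := by
        ext; simp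
      simp [Fin.init, hc0]
    simp only [partialZA, ZF, Set.mem_setOf_eq]
    constructor
    · rintro ⟨h1, h2⟩
      refine ⟨by rw [h00, ← E2]; exact h1, fun r hr => ?_⟩
      rw [h00, ← E3 r, ← E4, ← E5 r]
      exact h2 r hr
    · rintro ⟨h1, h2⟩
      refine ⟨by rw [E2, ← h00]; exact h1, fun r hr => ?_⟩
      rw [E3 r, E4, E5 r, ← h00]
      exact h2 r hr
  simp only [Z1, Set.mem_setOf_eq]
  constructor
  · rintro ⟨hp, hlast⟩
    have hθd : θ (Fin.last d) = 0 := by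
      exact pow_eq_zero_iff (by omega : α + 1 ≠ 0) |>.1 hlast
    exact ⟨hθd, (heq hθd).1 hp⟩
  · rintro ⟨hθd, hz⟩
    exact ⟨(heq hθd).2 hz, by rw [hθd]; simp⟩
end
end

section
/- Transversal data and the ML degree bound: let u ∈ ℂ^n with u₊ ≠ 0 be any data (possibly non-generic, e.g., containing zeros) such that every solution θ ∈ (ℂ*)^{d+1} of the likelihood system L_A(θ; u) is nonsingular, i.e., the Jacobian matrix of the square system L_A(·; u) with respect to (θ₀,…,θ_d) is invertible at θ (this is the condition that X_{A,c} and the affine space u + ker(A) intersect transversally). Then the solution set of L_A(θ; u) in (ℂ*)^{d+1} is finite and its cardinality is at most mldeg(X_{A,c}). -/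
noncomputable section

open scoped BigOperators

/-- A subset of `ℂ^ι` is Zariski closed if it is the common zero set of a
collection of polynomials. -/
def IsZariskiClosed {ι : Type} [Fintype ι] (S : Set (ι → ℂ)) : Prop :=
  ∃ T : Set (MvPolynomial ι ℂ), S = {x | ∀ f ∈ T, MvPolynomial.eval x f = 0}

/-- The likelihood system `L_A((θ₀, θ); u)` as a square map
`ℂ × ℂ^d → ℂ × ℂ^d`, for `f = Σ_i c_i θ^{a_i}` (a Laurent polynomial): the first
component is `θ₀ f - 1` and the component at `r : Fin d` is
`θ₀ θ_r ∂f/∂θ_r - u₊⁻¹ (A u)_{r+2} = θ₀ (Σ_i c_i a_{i,r} θ^{a_i}) - u₊⁻¹ Σ_i a_{i,r} u_i`. -/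
def likSystem {d n : ℕ} (a : Fin n → Fin d → ℤ) (c : Fin n → ℂ) (u : Fin n → ℂ)
    (p : ℂ × (Fin d → ℂ)) : ℂ × (Fin d → ℂ) :=
  (p.1 * (∑ i, c i * ∏ j, p.2 j ^ a i j) - 1,
    fun r => p.1 * (∑ i, c i * (a i r : ℂ) * ∏ j, p.2 j ^ a i j)
      - (∑ i, u i)⁻¹ * ∑ i, (a i r : ℂ) * u i)

/-- The solutions of the likelihood system `L_A(θ; u)` in the torus `(ℂ*)^{d+1}`. -/
def torusSolutions {d n : ℕ} (a : Fin n → Fin d → ℤ) (c : Fin n → ℂ) (u : Fin n → ℂ) :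
    Set (ℂ × (Fin d → ℂ)) :=
  {p | p.1 ≠ 0 ∧ (∀ j, p.2 j ≠ 0) ∧ likSystem a c u p = 0}

/-- `X_{A,c}` has ML degree `N`: there is a nonempty Zariski-open `U ⊆ ℂ^n` such that
for every `u ∈ U` with `u₊ ≠ 0` the system `L_A(θ; u)` has exactly `N` solutions in
`(ℂ*)^{d+1}`. -/
def HasMLDegree {d n : ℕ} (a : Fin n → Fin d → ℤ) (c : Fin n → ℂ) (N : ℕ) : Prop :=
  ∃ U : Set (Fin n → ℂ), U.Nonempty ∧ IsZariskiClosed Uᶜ ∧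
    ∀ u ∈ U, (∑ i, u i) ≠ 0 →
      (torusSolutions a c u).Finite ∧ (torusSolutions a c u).ncard = N

open Filter Topology

lemma contDiffAt_zpow' {x : ℂ} (hx : x ≠ 0) (m : ℤ) :
    ContDiffAt ℂ ⊤ (fun y : ℂ => y ^ m) x := by
  cases m with
  | ofNat k =>
    have : ContDiff ℂ ⊤ (fun y : ℂ => y ^ k) := contDiff_id.pow k
    simpa [zpow_natCast] using this.contDiffAt
  | negSucc k =>
    have h1 : ContDiffAt ℂ ⊤ (fun y : ℂ => y ^ (k + 1)) x := (contDiff_id.pow _).contDiffAt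
    have h2 : ContDiffAt ℂ ⊤ (fun y : ℂ => (y ^ (k + 1))⁻¹) x := h1.inv (pow_ne_zero _ hx)
    simpa [zpow_negSucc] using h2

lemma dense_good {n : ℕ} (U : Set (Fin n → ℂ)) (hU : U.Nonempty) (hZ : IsZariskiClosed Uᶜ)
    (u : Fin n → ℂ) (hu : (∑ i, u i) ≠ 0) {δ : ℝ} (hδ : 0 < δ) :
    ∃ u' ∈ U, (∑ i, u' i) ≠ 0 ∧ dist u' u < δ := by
  obtain ⟨T, hT⟩ := hZ
  obtain ⟨w, hw⟩ := hU
  have hf0 : ∃ f₀ ∈ T, MvPolynomial.eval w f₀ ≠ 0 := by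
    by_contra h
    push_neg at h
    have : w ∈ Uᶜ := by rw [hT]; exact fun f hf => h f hf
    exact this hw
  obtain ⟨f₀, hf₀T, hf₀w⟩ := hf0
  set g : Fin n → Polynomial ℂ := fun i => Polynomial.C (u i) + Polynomial.X * Polynomial.C (w i - u i) with hg
  set P : Polynomial ℂ := MvPolynomial.eval₂ Polynomial.C g f₀ with hP
  have heval : ∀ t : ℂ, P.eval t = MvPolynomial.eval (fun i => u i + t * (w i - u i)) f₀ := by
    intro t
    have hcl := MvPolynomial.eval₂_comp_left (Polynomial.evalRingHom t)
      (Polynomial.C : ℂ →+* Polynomial ℂ) g f₀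
    have h1 : (Polynomial.evalRingHom t).comp (Polynomial.C : ℂ →+* Polynomial ℂ) = RingHom.id ℂ := by
      ext x; simp
    rw [h1] at hcl
    have h2 : ((Polynomial.evalRingHom t : Polynomial ℂ → ℂ) ∘ g) = fun i => u i + t * (w i - u i) := by
      funext i; simp [hg]
    rw [h2] at hcl
    have h3 : MvPolynomial.eval₂ (RingHom.id ℂ) (fun i => u i + t * (w i - u i)) f₀
        = MvPolynomial.eval (fun i => u i + t * (w i - u i)) f₀ := by
      rw [MvPolynomial.eval₂_id]
    rw [hP]
    calc Polynomial.eval t (MvPolynomial.eval₂ Polynomial.C g f₀)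
        = (Polynomial.evalRingHom t) (MvPolynomial.eval₂ Polynomial.C g f₀) := rfl
      _ = _ := by rw [hcl, h3]
  have hP1 : P.eval 1 ≠ 0 := by
    have hww : (fun i => u i + 1 * (w i - u i)) = w := by funext i; ring
    rw [heval, hww]
    exact hf₀w
  have hPne : P ≠ 0 := fun h => hP1 (by simp [h])
  set s : ℂ := ∑ i, (w i - u i) with hs
  set Q : Polynomial ℂ := Polynomial.C (∑ i, u i) + Polynomial.X * Polynomial.C s with hQ
  have hQne : Q ≠ 0 := by
    intro h
    have h0 : Q.eval 0 = 0 := by rw [h]; simp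
    simp only [hQ, Polynomial.eval_add, Polynomial.eval_C, Polynomial.eval_mul,
      Polynomial.eval_X, zero_mul, add_zero] at h0
    exact hu h0
  have hbad : ({t : ℂ | P.eval t = 0} ∪ {t : ℂ | Q.eval t = 0}).Finite :=
    (Polynomial.finite_setOf_isRoot hPne).union (Polynomial.finite_setOf_isRoot hQne)
  set η : ℝ := δ / (‖w - u‖ + 1) with hη
  have hnorm1 : (0:ℝ) < ‖w - u‖ + 1 := by positivity
  have hηpos : 0 < η := div_pos hδ hnorm1
  have hball : (Metric.ball (0:ℂ) η).Infinite :=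
    infinite_of_mem_nhds (0:ℂ) (Metric.ball_mem_nhds _ hηpos)
  obtain ⟨t, ht⟩ := (hball.diff hbad).nonempty
  obtain ⟨htball, htgood⟩ := ht
  simp only [Set.mem_union, Set.mem_setOf_eq, not_or] at htgood
  obtain ⟨htP, htQ⟩ := htgood
  refine ⟨fun i => u i + t * (w i - u i), ?_, ?_, ?_⟩
  · by_contra h
    have : (fun i => u i + t * (w i - u i)) ∈ Uᶜ := h
    rw [hT] at this
    exact htP (by rw [heval]; exact this f₀ hf₀T)
  · intro h
    apply htQ
    simp only [hQ, Polynomial.eval_add, Polynomial.eval_C, Polynomial.eval_mul, Polynomial.eval_X]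
    rw [hs, ← h, Finset.sum_add_distrib, Finset.mul_sum]
  · have htη : ‖t‖ < η := by simpa [Metric.mem_ball, dist_eq_norm] using htball
    rw [dist_pi_lt_iff hδ]
    intro i
    have h1 : dist (u i + t * (w i - u i)) (u i) = ‖t‖ * ‖w i - u i‖ := by
      simp [dist_eq_norm, norm_mul]
    rw [h1]
    have h2 : ‖w i - u i‖ ≤ ‖w - u‖ := by
      have := norm_le_pi_norm (w - u) i
      simpa using this
    calc ‖t‖ * ‖w i - u i‖ ≤ ‖t‖ * (‖w - u‖ + 1) := by
          apply mul_le_mul_of_nonneg_left _ (norm_nonneg t); linarith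
      _ < η * (‖w - u‖ + 1) := by apply mul_lt_mul_of_pos_right htη hnorm1
      _ = δ := by rw [hη, div_mul_cancel₀ _ hnorm1.ne']

lemma contDiffAt_lik {d n : ℕ} (a : Fin n → Fin d → ℤ) (c : Fin n → ℂ)
    {u : Fin n → ℂ} {p : ℂ × (Fin d → ℂ)} (hu : (∑ i, u i) ≠ 0) (hp : ∀ j, p.2 j ≠ 0) :
    ContDiffAt ℂ ⊤
      (fun q : (Fin n → ℂ) × (ℂ × (Fin d → ℂ)) => likSystem a c q.1 q.2) (u, p) := by
  have hθ0 : ContDiffAt ℂ ⊤ (fun q : (Fin n → ℂ) × (ℂ × (Fin d → ℂ)) => q.2.1) (u, p) :=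
    (contDiff_fst.comp contDiff_snd).contDiffAt
  have hcoord : ∀ j, ContDiffAt ℂ ⊤ (fun q : (Fin n → ℂ) × (ℂ × (Fin d → ℂ)) => q.2.2 j) (u, p) := by
    intro j
    have h1 : ContDiff ℂ ⊤ (fun q : (Fin n → ℂ) × (ℂ × (Fin d → ℂ)) => q.2.2) :=
      contDiff_snd.comp contDiff_snd
    exact ((contDiff_pi.mp contDiff_id j).comp h1).contDiffAt
  have hzpow : ∀ (i : Fin n) (j : Fin d),
      ContDiffAt ℂ ⊤ (fun q : (Fin n → ℂ) × (ℂ × (Fin d → ℂ)) => q.2.2 j ^ a i j) (u, p) := by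
    intro i j
    exact (contDiffAt_zpow' (hp j) (a i j)).comp ((u, p) : (Fin n → ℂ) × (ℂ × (Fin d → ℂ))) (hcoord j)
  have hprod : ∀ i : Fin n,
      ContDiffAt ℂ ⊤ (fun q : (Fin n → ℂ) × (ℂ × (Fin d → ℂ)) => ∏ j, q.2.2 j ^ a i j) (u, p) :=
    fun i => contDiffAt_prod fun j _ => hzpow i j
  have hsum1 : ContDiffAt ℂ ⊤
      (fun q : (Fin n → ℂ) × (ℂ × (Fin d → ℂ)) => ∑ i, c i * ∏ j, q.2.2 j ^ a i j) (u, p) :=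
    ContDiffAt.sum fun i _ => contDiffAt_const.mul (hprod i)
  have hfst : ContDiffAt ℂ ⊤
      (fun q : (Fin n → ℂ) × (ℂ × (Fin d → ℂ)) =>
        q.2.1 * (∑ i, c i * ∏ j, q.2.2 j ^ a i j) - 1) (u, p) :=
    (hθ0.mul hsum1).sub contDiffAt_const
  have hinv : ContDiffAt ℂ ⊤
      (fun q : (Fin n → ℂ) × (ℂ × (Fin d → ℂ)) => (∑ i, q.1 i)⁻¹) (u, p) := by
    have h1 : ContDiffAt ℂ ⊤ (fun q : (Fin n → ℂ) × (ℂ × (Fin d → ℂ)) => ∑ i, q.1 i) (u, p) :=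
      ContDiffAt.sum fun i _ => ((contDiff_pi.mp contDiff_id i).comp contDiff_fst).contDiffAt
    exact h1.inv hu
  have hsnd : ∀ r : Fin d, ContDiffAt ℂ ⊤
      (fun q : (Fin n → ℂ) × (ℂ × (Fin d → ℂ)) =>
        q.2.1 * (∑ i, c i * (a i r : ℂ) * ∏ j, q.2.2 j ^ a i j)
          - (∑ i, q.1 i)⁻¹ * ∑ i, (a i r : ℂ) * q.1 i) (u, p) := by
    intro r
    have h1 : ContDiffAt ℂ ⊤
        (fun q : (Fin n → ℂ) × (ℂ × (Fin d → ℂ)) =>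
          ∑ i, c i * (a i r : ℂ) * ∏ j, q.2.2 j ^ a i j) (u, p) :=
      ContDiffAt.sum fun i _ => contDiffAt_const.mul (hprod i)
    have h2 : ContDiffAt ℂ ⊤
        (fun q : (Fin n → ℂ) × (ℂ × (Fin d → ℂ)) => ∑ i, (a i r : ℂ) * q.1 i) (u, p) :=
      ContDiffAt.sum fun i _ =>
        contDiffAt_const.mul ((contDiff_pi.mp contDiff_id i).comp contDiff_fst).contDiffAt
    exact (hθ0.mul h1).sub (hinv.mul h2)
  exact hfst.prodMk (contDiffAt_pi.mpr hsnd)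

lemma exists_local_solution {d n : ℕ} (a : Fin n → Fin d → ℤ) (c : Fin n → ℂ)
    {u : Fin n → ℂ} (hu : (∑ i, u i) ≠ 0) {p : ℂ × (Fin d → ℂ)}
    (hp : p ∈ torusSolutions a c u)
    (htr : Function.Bijective ⇑(fderiv ℂ (likSystem a c u) p)) :
    ∃ g : (Fin n → ℂ) → ℂ × (Fin d → ℂ), ContinuousAt g u ∧ g u = p ∧
      ∀ᶠ u' in 𝓝 u, likSystem a c u' (g u') = 0 := by
  obtain ⟨hp1, hp2, hp3⟩ := hp
  set F : (Fin n → ℂ) × (ℂ × (Fin d → ℂ)) → ℂ × (Fin d → ℂ) :=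
    fun q => likSystem a c q.1 q.2 with hF
  have hFc : ContDiffAt ℂ ⊤ F (u, p) := contDiffAt_lik a c hu hp2
  set DF := fderiv ℂ F (u, p) with hDF
  have hDFd : HasFDerivAt F DF (u, p) := (hFc.differentiableAt (by simp)).hasFDerivAt
  -- derivative of likSystem a c u at p equals DF ∘ inr
  have hcomp : HasFDerivAt (likSystem a c u)
      (DF.comp (ContinuousLinearMap.inr ℂ (Fin n → ℂ) (ℂ × (Fin d → ℂ)))) p := by
    have h1 : HasFDerivAt (fun p' : ℂ × (Fin d → ℂ) => (u, p'))
        (ContinuousLinearMap.inr ℂ (Fin n → ℂ) (ℂ × (Fin d → ℂ))) p :=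
      hasFDerivAt_prodMk_right u p
    exact hDFd.comp p h1
  have hfd : fderiv ℂ (likSystem a c u) p
      = DF.comp (ContinuousLinearMap.inr ℂ (Fin n → ℂ) (ℂ × (Fin d → ℂ))) := hcomp.fderiv
  rw [hfd] at htr
  -- G and its derivative
  set G : (Fin n → ℂ) × (ℂ × (Fin d → ℂ)) → (Fin n → ℂ) × (ℂ × (Fin d → ℂ)) :=
    fun q => (q.1, F q) with hG
  set DG := (ContinuousLinearMap.fst ℂ (Fin n → ℂ) (ℂ × (Fin d → ℂ))).prod DF with hDG
  have hGd : HasFDerivAt G DG (u, p) := (hasFDerivAt_fst).prodMk hDFd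
  have hGc : ContDiffAt ℂ ⊤ G (u, p) := contDiffAt_fst.prodMk hFc
  have hinj : Function.Injective ⇑DG := by
    intro x y hxy
    have h1 : DG (x - y) = 0 := by rw [map_sub, hxy, sub_self]
    set z := x - y with hz
    have h2 : z.1 = 0 ∧ DF z = 0 := by
      have := Prod.mk.injEq .. ▸ h1
      constructor
      · exact congrArg Prod.fst h1
      · exact congrArg Prod.snd h1
    have h3 : z.2 = 0 := by
      apply htr.injective
      rw [map_zero]
      show DF (0, z.2) = 0
      have hz0 : ((0 : Fin n → ℂ), z.2) = z := by rw [← h2.1]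
      rw [hz0]
      exact h2.2
    have : z = 0 := Prod.ext h2.1 h3
    exact sub_eq_zero.mp (hz ▸ this)
  have hbij : Function.Bijective ⇑DG :=
    ⟨hinj, (LinearMap.injective_iff_surjective (f := (DG : ((Fin n → ℂ) × (ℂ × (Fin d → ℂ))) →ₗ[ℂ]
      ((Fin n → ℂ) × (ℂ × (Fin d → ℂ)))))).mp hinj⟩
  set e := (LinearEquiv.ofBijective (DG : ((Fin n → ℂ) × (ℂ × (Fin d → ℂ))) →ₗ[ℂ]
      ((Fin n → ℂ) × (ℂ × (Fin d → ℂ)))) hbij).toContinuousLinearEquiv with he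
  have hecoe : (e : (Fin n → ℂ) × (ℂ × (Fin d → ℂ)) →L[ℂ]
      (Fin n → ℂ) × (ℂ × (Fin d → ℂ))) = DG := by
    ext x <;> rfl
  have hGstrict : HasStrictFDerivAt G (e : _ →L[ℂ] _) (u, p) := by
    refine hGc.hasStrictFDerivAt' ?_ (by simp)
    rw [hecoe]; exact hGd
  set linv := hGstrict.localInverse G e (u, p) with hlinv
  have hGup : G (u, p) = (u, 0) := by
    simp only [hG, hF]
    exact Prod.ext rfl hp3
  have hright := hGstrict.eventually_right_inverse
  rw [hGup] at hright
  have hcontinv : ContinuousAt linv (u, 0) := by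
    have := hGstrict.localInverse_continuousAt
    rwa [hGup] at this
  refine ⟨fun u' => (linv (u', 0)).2, ?_, ?_, ?_⟩
  · have hmap : Filter.Tendsto (fun u' : Fin n → ℂ => (u', (0 : ℂ × (Fin d → ℂ))))
        (𝓝 u) (𝓝 (u, 0)) := ((continuous_id.prodMk continuous_const).continuousAt)
    have hc2 : Filter.Tendsto (fun u' : Fin n → ℂ => linv (u', 0)) (𝓝 u)
        (𝓝 (linv (u, 0))) := hcontinv.tendsto.comp hmap
    exact (continuous_snd.tendsto (linv (u, 0))).comp hc2
  · have h1 : linv (u, 0) = (u, p) := by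
      have := hGstrict.localInverse_apply_image
      rwa [hGup] at this
    show (linv (u, 0)).2 = p
    rw [h1]
  · have hmap : Filter.Tendsto (fun u' => ((u', (0 : ℂ × (Fin d → ℂ))))) (𝓝 u) (𝓝 (u, 0)) :=
      ((continuous_id.prodMk continuous_const).continuousAt)
    filter_upwards [hmap.eventually hright] with u' h
    have h1 : (linv (u', 0)).1 = u' := congrArg Prod.fst h
    have h2 : F (linv (u', 0)) = 0 := congrArg Prod.snd h
    rw [hF] at h2
    simp only at h2
    rwa [h1] at h2

/-- Transversal data and the ML degree bound: if every solution of `L_A(θ; u)` in the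
torus is nonsingular (the Jacobian of the square system is invertible there, i.e. the
transversality of `X_{A,c}` and `u + ker A`), then the solution set is finite with at
most `mldeg(X_{A,c})` elements. -/
theorem transversal_data_mldeg_bound {d n : ℕ} (hd : 1 ≤ d) (hn : 1 ≤ n)
    (a : Fin n → Fin d → ℤ) (c : Fin n → ℂ) (hc : ∀ i, c i ≠ 0)
    (hrank : (Matrix.of fun (r : Fin (d + 1)) (i : Fin n) =>
        if h : (r : ℕ) = 0 then (1 : ℚ)
        else (a i ⟨(r : ℕ) - 1, by have := r.isLt; omega⟩ : ℚ)).rank = d + 1)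
    (hlattice : Submodule.span ℤ (Set.range fun i : Fin n => fun r : Fin (d + 1) =>
        if h : (r : ℕ) = 0 then (1 : ℤ)
        else a i ⟨(r : ℕ) - 1, by have := r.isLt; omega⟩) = ⊤)
    (N : ℕ) (hml : HasMLDegree a c N)
    (u : Fin n → ℂ) (hu : (∑ i, u i) ≠ 0)
    (htrans : ∀ p ∈ torusSolutions a c u,
      Function.Bijective ⇑(fderiv ℂ (likSystem a c u) p)) :
    (torusSolutions a c u).Finite ∧ (torusSolutions a c u).ncard ≤ N := by
  obtain ⟨U, hUne, hUz, hUprop⟩ := hml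
  -- key counting bound
  have key : ∀ S : Finset (ℂ × (Fin d → ℂ)),
      ↑S ⊆ torusSolutions a c u → S.card ≤ N := by
    intro S hS
    have H : ∀ p ∈ S, ∃ g : (Fin n → ℂ) → ℂ × (Fin d → ℂ),
        ContinuousAt g u ∧ g u = p ∧ ∀ᶠ u' in 𝓝 u, likSystem a c u' (g u') = 0 :=
      fun p hp => exists_local_solution a c hu (hS hp) (htrans p (hS hp))
    choose g hg1 hg2 hg3 using H
    set g' : (ℂ × (Fin d → ℂ)) → (Fin n → ℂ) → ℂ × (Fin d → ℂ) :=
      fun p => if h : p ∈ S then g p h else fun _ => 0 with hg'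
    have hg'eq : ∀ p (h : p ∈ S), g' p = g p h := fun p h => dif_pos h
    have hT : ∀ p ∈ S, Tendsto (g' p) (𝓝 u) (𝓝 p) := by
      intro p hp
      rw [hg'eq p hp]
      have := (hg1 p hp).tendsto
      rwa [hg2 p hp] at this
    -- per-point eventual properties
    have Ev : ∀ᶠ u' in 𝓝 u, ∀ p ∈ S,
        (likSystem a c u' (g' p u') = 0 ∧
          (g' p u').1 ≠ 0 ∧ (∀ j, (g' p u').2 j ≠ 0)) ∧
        ∀ q ∈ S, p ≠ q → g' p u' ≠ g' q u' := by
      rw [Filter.eventually_all_finset]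
      intro p hp
      have e1 : ∀ᶠ u' in 𝓝 u, likSystem a c u' (g' p u') = 0 := by
        rw [hg'eq p hp]; exact hg3 p hp
      have e2 : ∀ᶠ u' in 𝓝 u, (g' p u').1 ≠ 0 := by
        have h1 : Tendsto (fun u' => (g' p u').1) (𝓝 u) (𝓝 p.1) :=
          (continuous_fst.tendsto p).comp (hT p hp)
        exact h1.eventually_ne (hS hp).1
      have e3 : ∀ᶠ u' in 𝓝 u, ∀ j, (g' p u').2 j ≠ 0 := by
        rw [eventually_all]
        intro j
        have h1 : Tendsto (fun u' => (g' p u').2 j) (𝓝 u) (𝓝 (p.2 j)) :=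
          ((continuous_apply j).tendsto p.2).comp ((continuous_snd.tendsto p).comp (hT p hp))
        exact h1.eventually_ne ((hS hp).2.1 j)
      have e4 : ∀ᶠ u' in 𝓝 u, ∀ q ∈ S, p ≠ q → g' p u' ≠ g' q u' := by
        rw [Filter.eventually_all_finset]
        intro q hq
        by_cases hpq : p = q
        · exact Filter.Eventually.of_forall fun _ h => absurd hpq h
        · have h1 : Tendsto (fun u' => g' p u' - g' q u') (𝓝 u) (𝓝 (p - q)) :=
            (hT p hp).sub (hT q hq)
          have h2 := h1.eventually_ne (sub_ne_zero.mpr hpq)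
          filter_upwards [h2] with u' h _ heq
          exact h (by rw [heq, sub_self])
      filter_upwards [e1, e2, e3, e4] with u' h1 h2 h3 h4
      exact ⟨⟨h1, h2, h3⟩, h4⟩
    rw [Metric.eventually_nhds_iff] at Ev
    obtain ⟨δ, hδpos, hδ⟩ := Ev
    obtain ⟨u', hu'U, hu'sum, hu'dist⟩ := dense_good U hUne hUz u hu hδpos
    have hprop := hδ hu'dist
    obtain ⟨hfin', hcard'⟩ := hUprop u' hu'U hu'sum
    have hle : S.card ≤ hfin'.toFinset.card := by
      apply Finset.card_le_card_of_injOn (fun p => g' p u')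
      · intro p hp
        rw [Finset.mem_coe, Set.Finite.mem_toFinset]
        obtain ⟨⟨h1, h2, h3⟩, _⟩ := hprop p hp
        exact ⟨h2, h3, h1⟩
      · intro p₁ h₁ p₂ h₂ heq
        by_contra hne
        exact (hprop p₁ (by simpa using h₁)).2 p₂ (by simpa using h₂) hne heq
    rwa [← Set.ncard_eq_toFinset_card _ hfin', hcard'] at hle
  have hfin : (torusSolutions a c u).Finite := by
    by_contra hinf
    rw [← Set.Infinite] at hinf
    obtain ⟨t, hts, htfin, htcard⟩ := hinf.exists_subset_ncard_eq (N + 1)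
    have h1 := key htfin.toFinset (by rwa [Set.Finite.coe_toFinset])
    rw [← Set.ncard_eq_toFinset_card _ htfin, htcard] at h1
    omega
  refine ⟨hfin, ?_⟩
  have h1 := key hfin.toFinset (by rw [Set.Finite.coe_toFinset])
  rwa [← Set.ncard_eq_toFinset_card _ hfin] at h1
end
end

section
/- Facial structure of quasi-independence polytopes: let S ⊆ [m]×[k] be nonempty, let I ⊆ [m] and J ⊆ [k], and set T = S ∩ (I×J). Then conv{(e_i, e_j) : (i,j) ∈ T} is an exposed face of the polytope conv{(e_i, e_j) : (i,j) ∈ S} ⊆ ℝ^{m+k}; an exposing functional is ℓ(x, y) = Σ_{i∈I} x_i + Σ_{j∈J} y_j, which takes value 2 exactly on the vertices (e_i, e_j) with (i,j) ∈ T and value at most 1 on all other vertices. -/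
noncomputable section

open scoped BigOperators

lemma aux_face {ι E : Type*} [AddCommGroup E] [Module ℝ E]
    (s t : Finset ι) (v : ι → E) (f : E →ₗ[ℝ] ℝ) (c : ℝ) (hts : t ⊆ s)
    (h1 : ∀ p ∈ t, f (v p) = c) (h2 : ∀ p ∈ s, p ∉ t → f (v p) < c)
    (htne : t.Nonempty) :
    convexHull ℝ (v '' ↑t) = {x ∈ convexHull ℝ (v '' ↑s) | ∀ y ∈ convexHull ℝ (v '' ↑s), f y ≤ f x} := by
  have hle : ∀ y ∈ convexHull ℝ (v '' (↑s : Set ι)), f y ≤ c := by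
    intro y hy
    have : convexHull ℝ (v '' ↑s) ⊆ {z | f z ≤ c} := by
      apply convexHull_min _ (convex_halfSpace_le f.isLinear c)
      rintro _ ⟨p, hp, rfl⟩
      rcases em (p ∈ t) with h | h
      · exact le_of_eq (h1 p h)
      · exact (h2 p hp h).le
    exact this hy
  have hconst : ∀ x ∈ convexHull ℝ (v '' (↑t : Set ι)), f x = c := by
    intro x hx
    have : convexHull ℝ (v '' ↑t) ⊆ {z | f z = c} := by
      apply convexHull_min _ (convex_hyperplane f.isLinear c)
      rintro _ ⟨p, hp, rfl⟩
      exact h1 p hp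
    exact this hx
  ext x
  constructor
  · intro hx
    have hxs : x ∈ convexHull ℝ (v '' (↑s : Set ι)) :=
      convexHull_mono (Set.image_mono (f := v) (by exact_mod_cast hts)) hx
    refine ⟨hxs, fun y hy => ?_⟩
    rw [hconst x hx]
    exact hle y hy
  · rintro ⟨hxs, hmax⟩
    obtain ⟨p0, hp0⟩ := htne
    have hvp0 : v p0 ∈ convexHull ℝ (v '' (↑s : Set ι)) :=
      subset_convexHull ℝ _ ⟨p0, hts hp0, rfl⟩
    have hfx : f x = c := le_antisymm (hle x hxs)
      (by rw [← h1 p0 hp0]; exact hmax _ hvp0)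
    -- represent x as convex combination
    rw [convexHull_eq] at hxs
    obtain ⟨ι', u, w, z, hw0, hw1, hz, hcm⟩ := hxs
    have hxsum : x = ∑ i ∈ u, w i • z i := by
      rw [← hcm, Finset.centerMass_eq_of_sum_1 _ _ hw1]
    have hfz : ∀ i ∈ u, f (z i) ≤ c := fun i hi =>
      hle (z i) (subset_convexHull ℝ _ (hz i hi))
    have hkey : ∀ i ∈ u, w i ≠ 0 → f (z i) = c := by
      by_contra hcon
      push_neg at hcon
      obtain ⟨i0, hi0, hwi0, hne⟩ := hcon
      have hlt : f (z i0) < c := lt_of_le_of_ne (hfz i0 hi0) hne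
      have : f x < c := by
        rw [hxsum, map_sum]
        have : ∑ i ∈ u, f (w i • z i) < ∑ i ∈ u, w i * c := by
          apply Finset.sum_lt_sum
          · intro i hi
            rw [map_smul, smul_eq_mul]
            exact mul_le_mul_of_nonneg_left (hfz i hi) (hw0 i hi)
          · refine ⟨i0, hi0, ?_⟩
            rw [map_smul, smul_eq_mul]
            exact mul_lt_mul_of_pos_left hlt (lt_of_le_of_ne (hw0 i0 hi0) (Ne.symm hwi0))
        calc ∑ i ∈ u, f (w i • z i) < ∑ i ∈ u, w i * c := this
          _ = c := by rw [← Finset.sum_mul, hw1, one_mul]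
      exact absurd hfx (ne_of_lt this)
    have hzt : ∀ i ∈ u, w i ≠ 0 → z i ∈ v '' (↑t : Set ι) := by
      intro i hi hwi
      obtain ⟨p, hp, hpz⟩ := hz i hi
      rcases em (p ∈ t) with h | h
      · exact ⟨p, h, hpz⟩
      · exfalso
        have := h2 p hp h
        rw [hpz] at this
        exact absurd (hkey i hi hwi) (ne_of_lt this)
    -- restrict to nonzero weights
    set u' := u.filter (fun i => w i ≠ 0) with hu'
    have hw1' : ∑ i ∈ u', w i = 1 := by
      rw [hu', Finset.sum_filter_ne_zero, hw1]
    have : x ∈ convexHull ℝ (v '' (↑t : Set ι)) := by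
      rw [← hcm, ← Finset.centerMass_filter_ne_zero]
      refine Finset.centerMass_mem_convexHull _ (fun i hi => hw0 i (Finset.mem_filter.mp hi).1)
        (by rw [hw1']; exact one_pos) (fun i hi => ?_)
      obtain ⟨hiu, hwi⟩ := Finset.mem_filter.mp hi
      exact hzt i hiu hwi
    exact this

/-- Facial structure of quasi-independence polytopes: for `T = S ∩ (I × J)`, the
polytope `conv{(e_i, e_j) : (i,j) ∈ T}` is an exposed face of
`conv{(e_i, e_j) : (i,j) ∈ S} ⊆ ℝ^{m+k}`; an exposing functional is
`ℓ(x, y) = Σ_{i ∈ I} x_i + Σ_{j ∈ J} y_j`, which takes the value `2` exactly on the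
vertices `(e_i, e_j)` with `(i,j) ∈ T` and value at most `1` on all other vertices,
and whose set of maximizers over the polytope is exactly `conv{(e_i, e_j) : (i,j) ∈ T}`. -/
theorem quasi_independence_facial_structure (m k : ℕ) (hm : 1 ≤ m) (hk : 1 ≤ k)
    (S : Finset (Fin m × Fin k)) (hS : S.Nonempty)
    (I : Finset (Fin m)) (J : Finset (Fin k))
    (T : Finset (Fin m × Fin k)) (hT : T = S ∩ I ×ˢ J)
    (v : Fin m × Fin k → (Fin m → ℝ) × (Fin k → ℝ))
    (hv : v = fun p => (Pi.single p.1 1, Pi.single p.2 1))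
    (ℓ : (Fin m → ℝ) × (Fin k → ℝ) → ℝ)
    (hℓ : ℓ = fun x => (∑ i ∈ I, x.1 i) + ∑ j ∈ J, x.2 j) :
    IsExposed ℝ (convexHull ℝ (v '' ↑S)) (convexHull ℝ (v '' ↑T)) ∧
    (∀ p ∈ T, ℓ (v p) = 2) ∧
    (∀ p ∈ S, p ∉ T → ℓ (v p) ≤ 1) ∧
    (T.Nonempty →
      convexHull ℝ (v '' ↑T) =
        {x ∈ convexHull ℝ (v '' ↑S) | ∀ y ∈ convexHull ℝ (v '' ↑S), ℓ y ≤ ℓ x}) := by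
  -- the functional as a linear map
  set Llin : ((Fin m → ℝ) × (Fin k → ℝ)) →ₗ[ℝ] ℝ :=
    { toFun := fun x => (∑ i ∈ I, x.1 i) + ∑ j ∈ J, x.2 j
      map_add' := by intro a b; simp [Finset.sum_add_distrib]; ring
      map_smul' := by intro c a; simp [Finset.mul_sum, mul_add] } with hL
  have hℓL : ∀ x, ℓ x = Llin x := by intro x; rw [hℓ, hL]; rfl
  -- vertex values
  have hval : ∀ p : Fin m × Fin k,
      ℓ (v p) = (if p.1 ∈ I then (1:ℝ) else 0) + (if p.2 ∈ J then (1:ℝ) else 0) := by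
    intro p
    rw [hℓ, hv]
    simp only [Pi.single_apply]
    rw [Finset.sum_ite_eq' I p.1 (fun _ => (1:ℝ)), Finset.sum_ite_eq' J p.2 (fun _ => (1:ℝ))]
  have h2T : ∀ p ∈ T, ℓ (v p) = 2 := by
    intro p hp
    rw [hT, Finset.mem_inter, Finset.mem_product] at hp
    rw [hval, if_pos hp.2.1, if_pos hp.2.2]; norm_num
  have h1ST : ∀ p ∈ S, p ∉ T → ℓ (v p) ≤ 1 := by
    intro p hpS hpT
    rw [hT, Finset.mem_inter, Finset.mem_product] at hpT
    push_neg at hpT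
    rw [hval]
    rcases em (p.1 ∈ I) with h | h
    · rw [if_pos h, if_neg (hpT hpS h)]; norm_num
    · rw [if_neg h]
      split_ifs <;> norm_num
  have hts : T ⊆ S := by rw [hT]; exact Finset.inter_subset_left
  have hmain : T.Nonempty →
      convexHull ℝ (v '' ↑T) =
        {x ∈ convexHull ℝ (v '' ↑S) | ∀ y ∈ convexHull ℝ (v '' ↑S), ℓ y ≤ ℓ x} := by
    intro hTne
    have := aux_face S T v Llin 2 hts
      (fun p hp => by rw [← hℓL]; exact h2T p hp)
      (fun p hpS hpT => by rw [← hℓL]; exact lt_of_le_of_lt (h1ST p hpS hpT) one_lt_two)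
      hTne
    rw [this]
    ext x
    simp only [Set.mem_setOf_eq, hℓL]
  refine ⟨?_, h2T, h1ST, hmain⟩
  intro hne
  have hTne : T.Nonempty := by
    rw [← Finset.coe_nonempty, ← Set.image_nonempty (f := v)]
    exact convexHull_nonempty_iff.mp hne
  exact ⟨LinearMap.toContinuousLinearMap Llin, by
    rw [hmain hTne]; ext x; simp only [Set.mem_setOf_eq, hℓL,
      LinearMap.coe_toContinuousLinearMap']⟩
end
end
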